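/- arXiv:1503.01389 — 2 statements merged into one kernel-verified Lean document; each statement's English description precedes it below -/
import Mathlib

section
/- For a ±-cochain complex X = {Xⁿ, d⁺ₙ, d⁻ₙ} of commutative monoids, the relation ρⁿ on Zⁿ(X) defined by x ρⁿ y iff there exist u, v ∈ Xⁿ⁻¹ with x + d⁺ₙ₋₁(u) + d⁻ₙ₋₁(v) = y + d⁺ₙ₋₁(v) + d⁻ₙ₋₁(u) is an equivalence relation compatible with addition (a congruence). -/
/-!
Witnesses of two relations are added. Transitivity needs no cancellation, which a monoid lacks:
adding `d⁺u' + d⁻v'` to `x + d⁺u + d⁻v = y + d⁺v + d⁻u` produces the left side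
`y + d⁺u' + d⁻v'` of the second relation, up to the summand `d⁺v + d⁻u`.
-/

namespace AddCon

variable {M N : Type*} [AddZeroClass M] [AddCommMonoid N]

theorem ofHomPair_trans (f g : M →+ N) {x y z : N} {u v u' v' : M}
    (hxy : x + f u + g v = y + f v + g u) (hyz : y + f u' + g v' = z + f v' + g u') :
    x + f (u + u') + g (v + v') = z + f (v + v') + g (u + u') :=
  calc x + f (u + u') + g (v + v')
      = (x + f u + g v) + (f u' + g v') := by simp only [map_add]; abel
    _ = (y + f u' + g v') + (f v + g u) := by rw [hxy]; abel
    _ = z + f (v + v') + g (u + u') := by rw [hyz]; simp only [map_add]; abel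

theorem ofHomPair_add (f g : M →+ N) {x y x' y' : N} {u v u' v' : M}
    (h : x + f u + g v = y + f v + g u) (h' : x' + f u' + g v' = y' + f v' + g u') :
    x + x' + f (u + u') + g (v + v') = y + y' + f (v + v') + g (u + u') :=
  calc x + x' + f (u + u') + g (v + v')
      = (x + f u + g v) + (x' + f u' + g v') := by simp only [map_add]; abel
    _ = (y + f v + g u) + (y' + f v' + g u') := by rw [h, h']
    _ = y + y' + f (v + v') + g (u + u') := by simp only [map_add]; abel

def ofHomPair (f g : M →+ N) : AddCon N where
  r x y := ∃ u v, x + f u + g v = y + f v + g u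
  iseqv :=
    { refl := fun _ => ⟨0, 0, rfl⟩
      symm := fun ⟨u, v, h⟩ => ⟨v, u, h.symm⟩
      trans := fun ⟨u, v, h⟩ ⟨u', v', h'⟩ => ⟨u + u', v + v', ofHomPair_trans f g h h'⟩ }
  add' := fun ⟨u, v, h⟩ ⟨u', v', h'⟩ => ⟨u + u', v + v', ofHomPair_add f g h h'⟩

end AddCon

theorem stmt7_general (X : ℤ → Type*) [∀ n, AddCommMonoid (X n)]
    (dp dm : ∀ n, X n →+ X (n + 1))
    (n : ℤ) :
    let Zc : Set (X (n + 1)) := {x | dp (n + 1) x = dm (n + 1) x}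
    let r : X (n + 1) → X (n + 1) → Prop := fun x y =>
      ∃ u v : X n, x + dp n u + dm n v = y + dp n v + dm n u
    (∀ x ∈ Zc, r x x) ∧
    (∀ x ∈ Zc, ∀ y ∈ Zc, r x y → r y x) ∧
    (∀ x ∈ Zc, ∀ y ∈ Zc, ∀ z ∈ Zc, r x y → r y z → r x z) ∧
    (∀ x ∈ Zc, ∀ y ∈ Zc, ∀ x' ∈ Zc, ∀ y' ∈ Zc,
      r x y → r x' y' → r (x + x') (y + y')) := by
  intro Zc r
  let ρ := AddCon.ofHomPair (dp n) (dm n)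
  exact ⟨fun x _ => ρ.refl x, fun _ _ _ _ => ρ.symm, fun _ _ _ _ _ _ => ρ.trans,
    fun _ _ _ _ _ _ _ _ => ρ.add⟩

/-- For a ±-cochain complex of commutative monoids, the relation `ρ` on the cocycles
(`x ρ y ↔ ∃ u v, x + d⁺u + d⁻v = y + d⁺v + d⁻u`) is an equivalence relation
compatible with addition, i.e. a congruence. -/
theorem stmt7 (X : ℤ → Type*) [∀ n, AddCommMonoid (X n)]
    (dp dm : ∀ n, X n →+ X (n + 1))
    (hcx : ∀ (n : ℤ) (x : X n),
      dp (n + 1) (dp n x) + dm (n + 1) (dm n x)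
        = dm (n + 1) (dp n x) + dp (n + 1) (dm n x)) (n : ℤ) :
    let Zc : Set (X (n + 1)) := {x | dp (n + 1) x = dm (n + 1) x}
    let r : X (n + 1) → X (n + 1) → Prop := fun x y =>
      ∃ u v : X n, x + dp n u + dm n v = y + dp n v + dm n u
    (∀ x ∈ Zc, r x x) ∧
    (∀ x ∈ Zc, ∀ y ∈ Zc, r x y → r y x) ∧
    (∀ x ∈ Zc, ∀ y ∈ Zc, ∀ z ∈ Zc, r x y → r y z → r x z) ∧
    (∀ x ∈ Zc, ∀ y ∈ Zc, ∀ x' ∈ Zc, ∀ y' ∈ Zc,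
      r x y → r x' y' → r (x + x') (y + y')) :=
  stmt7_general X dp dm n
end

section
/- Let I be a finite linearly ordered set and let (Mᵢⱼ)_{i<j} be the family with Mᵢⱼ = {q·Tⁿ : q ∈ Gˣ, n ∈ ℤ} ≅ Gˣ × ℤ for an abelian group Gˣ. Consider 1-cochains x = (a_{ij}) with a_{ij} = (q_{ij}, n_{ij}) ∈ Gˣ × ℤ satisfying the cocycle condition a_{ik} = a_{ij}·a_{jk} componentwise on triple overlaps, which forces q_{ik} = q_{ij}q_{jk} and n_{ij} = n_{jk} = n_{ik} for all i<j<k. Then two cocycles x = (q_{ij}, n_{ij}) and y = (q'_{ij}, n'_{ij}) are cohomologous (∃ (uᵢ),(vᵢ) ∈ ∏ᵢ Gˣ with q_{ij}·uᵢ·vⱼ·(q'_{ij})⁻¹ = uⱼ·vᵢ and n_{ij} = n'_{ij}) if and only if n_{ij} = n'_{ij} for all i<j. Consequently the first Čech cohomology group of this complex is isomorphic to ℤ. -/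
/-!
The `ℤ`-component of a cocycle is a single integer, since the cocycle condition makes
`n i j` agree on any two pairs sharing an endpoint, and any two pairs are joined through
`(min i i', max j j')`. The `G`-component of `x y⁻¹` is a cocycle, and every such cocycle
`p` is a coboundary: with a base point `i₀`, take `u i = p i₀ i` above `i₀` and
`u i = (p i i₀)⁻¹` below it. Hence the class of a cocycle is determined by its integer,
and every integer occurs, via the cocycle with trivial `G`-component.
-/

namespace OrderedPairs

variable {I : Type*} [LinearOrder I]

section Constant

variable {α : Type*} {n : I → I → α}

theorem eq_of_lt_of_lt_left (hn : ∀ i j k, i < j → j < k → n i j = n j k ∧ n i k = n i j)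
    {i j k : I} (hij : i < j) (hik : i < k) : n i j = n i k := by
  rcases lt_trichotomy j k with h | rfl | h
  · exact (hn i j k hij h).2.symm
  · rfl
  · exact (hn i k j hik h).2

theorem eq_of_lt_of_lt_right (hn : ∀ i j k, i < j → j < k → n i j = n j k ∧ n i k = n i j)
    {i j k : I} (hik : i < k) (hjk : j < k) : n i k = n j k := by
  rcases lt_trichotomy i j with h | rfl | h
  · rw [(hn i j k h hjk).2, (hn i j k h hjk).1]
  · rfl
  · rw [← (hn j i k h hik).1, ← (hn j i k h hik).2]

theorem eq_of_lt_of_lt (hn : ∀ i j k, i < j → j < k → n i j = n j k ∧ n i k = n i j)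
    {i j i' j' : I} (hij : i < j) (hij' : i' < j') : n i j = n i' j' := by
  have hj : i < max j j' := lt_max_of_lt_left hij
  have hj' : i' < max j j' := lt_max_of_lt_right hij'
  calc n i j = n i (max j j') := eq_of_lt_of_lt_left hn hij hj
    _ = n (min i i') (max j j') := eq_of_lt_of_lt_right hn hj (min_le_left i i' |>.trans_lt hj)
    _ = n i' (max j j') := (eq_of_lt_of_lt_right hn hj' (min_le_right i i' |>.trans_lt hj')).symm
    _ = n i' j' := (eq_of_lt_of_lt_left hn hij' hj').symm

end Constant

theorem exists_mul_eq_of_cocycle {G : Type*} [CommGroup G] {p : I → I → G}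
    (hp : ∀ i j k, i < j → j < k → p i k = p i j * p j k) (i₀ : I) :
    ∃ u : I → G, ∀ i j, i < j → p i j * u i = u j := by
  refine ⟨fun i => if i₀ < i then p i₀ i else if i < i₀ then (p i i₀)⁻¹ else 1, ?_⟩
  intro i j hij
  rcases lt_trichotomy i₀ i with h | rfl | h
  · simp [h, h.trans hij, hp _ _ _ h hij, mul_comm]
  · simp [hij]
  · rcases lt_trichotomy i₀ j with h' | rfl | h'
    · simp [h', h, not_lt_of_gt h, hp _ _ _ h h']
    · simp [h, not_lt_of_gt h]
    · simp [h, h', not_lt_of_gt h, not_lt_of_gt h', hp _ _ _ hij h']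

theorem exists_coboundary_of_cocycles {G : Type*} [CommGroup G] {x y : I → I → G}
    (hx : ∀ i j k, i < j → j < k → x i k = x i j * x j k)
    (hy : ∀ i j k, i < j → j < k → y i k = y i j * y j k) (i₀ : I) :
    ∃ u : I → G, ∀ i j, i < j → x i j * u i = y i j * u j := by
  obtain ⟨u, hu⟩ := exists_mul_eq_of_cocycle (p := x / y)
    (fun i j k hij hjk => by simp [hx i j k hij hjk, hy i j k hij hjk, mul_div_mul_comm]) i₀
  refine ⟨u, fun i j hij => ?_⟩
  rw [← hu i j hij, Pi.div_apply, Pi.div_apply, div_mul_eq_mul_div, mul_div_cancel]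

end OrderedPairs

open OrderedPairs

theorem stmt18_general (G : Type*) [CommGroup G] (I : Type*) [LinearOrder I]
    (i₀ i₁ : I) (h01 : i₀ < i₁) :
    let Z := {x : (I → I → G) × (I → I → ℤ) // ∀ i j k : I, i < j → j < k →
      x.1 i k = x.1 i j * x.1 j k ∧ x.2 i j = x.2 j k ∧ x.2 i k = x.2 i j}
    let r : Z → Z → Prop := fun x y =>
      ∃ u v : I → G,
        (∀ i j : I, i < j → x.1.1 i j * u i * v j = y.1.1 i j * u j * v i) ∧
        (∀ i j : I, i < j → x.1.2 i j = y.1.2 i j)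
    (∀ x y : Z, r x y ↔ ∀ i j : I, i < j → x.1.2 i j = y.1.2 i j) ∧
      Nonempty (Quot r ≃ ℤ) := by
  intro Z r
  have hn (x : Z) : ∀ i j k, i < j → j < k → x.1.2 i j = x.1.2 j k ∧ x.1.2 i k = x.1.2 i j :=
    fun i j k hij hjk => (x.2 i j k hij hjk).2
  have hr (x y : Z) : r x y ↔ ∀ i j : I, i < j → x.1.2 i j = y.1.2 i j := by
    refine ⟨fun ⟨_, _, _, h⟩ => h, fun h => ?_⟩
    obtain ⟨u, hu⟩ := exists_coboundary_of_cocycles (fun i j k hij hjk => (x.2 i j k hij hjk).1)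
      (fun i j k hij hjk => (y.2 i j k hij hjk).1) i₀
    exact ⟨u, 1, fun i j hij => by simpa using hu i j hij, h⟩
  refine ⟨hr, ⟨Equiv.ofBijective (Quot.lift (fun x : Z => x.1.2 i₀ i₁)
    fun x y hxy => (hr x y).1 hxy i₀ i₁ h01) ⟨?_, fun m => ?_⟩⟩⟩
  · rintro ⟨x⟩ ⟨y⟩ (hxy : x.1.2 i₀ i₁ = y.1.2 i₀ i₁)
    refine Quot.sound <| (hr x y).2 fun i j hij => ?_
    rw [eq_of_lt_of_lt (hn x) hij h01, hxy, eq_of_lt_of_lt (hn y) h01 hij]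
  · exact ⟨Quot.mk r ⟨(1, fun _ _ => m), by simp⟩, rfl⟩

/-- Model of `Ȟ¹(ℙⁿ, O*)` with the standard cover: 1-cocycles with values in
`Gˣ × ℤ` over a finite linearly ordered index set. Two cocycles are cohomologous
iff their `ℤ`-components agree; consequently the first Čech cohomology is `ℤ`. -/
theorem stmt18 (G : Type*) [CommGroup G] (I : Type*) [LinearOrder I] [Fintype I]
    (i₀ i₁ : I) (h01 : i₀ < i₁) :
    let Z := {x : (I → I → G) × (I → I → ℤ) // ∀ i j k : I, i < j → j < k →
      x.1 i k = x.1 i j * x.1 j k ∧ x.2 i j = x.2 j k ∧ x.2 i k = x.2 i j}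
    let r : Z → Z → Prop := fun x y =>
      ∃ u v : I → G,
        (∀ i j : I, i < j → x.1.1 i j * u i * v j = y.1.1 i j * u j * v i) ∧
        (∀ i j : I, i < j → x.1.2 i j = y.1.2 i j)
    (∀ x y : Z, r x y ↔ ∀ i j : I, i < j → x.1.2 i j = y.1.2 i j) ∧
      Nonempty (Quot r ≃ ℤ) :=
  stmt18_general G I i₀ i₁ h01
end
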